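/- arXiv:0705.2412 — 4 statements merged into one kernel-verified Lean document; each statement's English description precedes it below -/
import Mathlib

section
/- Let $a>0$ and let $T_1,T_2,T_3:(-a,a)\to M_n(\mathbb{C})$ be continuously differentiable and satisfy the reduced Nahm equations $T_1' = [T_2,T_3]$, $T_2' = [T_3,T_1]$, $T_3' = [T_1,T_2]$ on $(-a,a)$. If the symmetry condition $T_i(0) = T_i(0)^T$ holds for $i=1,2,3$, then $T_i(-z) = T_i(z)^T$ for all $z\in(-a,a)$ and all $i=1,2,3$. -/
/-!
Reversing time and transposing, `T ↦ (z ↦ T(-z)ᵀ)`, maps solutions of the reduced Nahm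
equations to solutions, because `⁅Bᵀ, Cᵀ⁆ = -⁅B, C⁆ᵀ`. A solution that is symmetric at `0` and
its image therefore solve the same polynomial, hence locally Lipschitz, autonomous ODE with the
same initial value, so they agree on the whole (connected) interval.
-/

open Matrix Set Filter Topology

attribute [local instance] Matrix.normedAddCommGroup Matrix.normedSpace

section ODE

variable {E : Type*} [NormedAddCommGroup E] [NormedSpace ℝ E]

theorem ODE_solution_unique_of_eventually_of_locallyLipschitz {v : E → E}
    (hv : LocallyLipschitz v) {f g : ℝ → E} {t₀ : ℝ}
    (hf : ∀ᶠ t in 𝓝 t₀, HasDerivAt f (v (f t)) t)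
    (hg : ∀ᶠ t in 𝓝 t₀, HasDerivAt g (v (g t)) t) (heq : f t₀ = g t₀) : f =ᶠ[𝓝 t₀] g := by
  obtain ⟨K, U, hU, hlip⟩ := hv (f t₀)
  have hfU : ∀ᶠ t in 𝓝 t₀, f t ∈ U := hf.self_of_nhds.continuousAt hU
  have hgU : ∀ᶠ t in 𝓝 t₀, g t ∈ U := hg.self_of_nhds.continuousAt (heq ▸ hU)
  exact ODE_solution_unique_of_eventually (v := fun _ => v) (s := fun _ => U)
    (.of_forall fun _ => hlip) (hf.and hfU) (hg.and hgU) heq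

theorem ODE_solution_unique_of_isPreconnected {v : E → E} (hv : LocallyLipschitz v)
    {s : Set ℝ} (hs : IsOpen s) (hs' : IsPreconnected s) {f g : ℝ → E}
    (hf : ∀ t ∈ s, HasDerivAt f (v (f t)) t) (hg : ∀ t ∈ s, HasDerivAt g (v (g t)) t)
    {t₀ : ℝ} (ht₀ : t₀ ∈ s) (heq : f t₀ = g t₀) : EqOn f g s := by
  intro t ht
  -- `{f = g}` is open by local uniqueness and `{f ≠ g}` by continuity.
  refine (hs'.induction₂ (fun x y => f x = g x ↔ f y = g y) (fun x hx => ?_)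
    (fun _ _ _ _ _ _ => Iff.trans) (fun _ _ _ _ => Iff.symm) ht₀ ht).1 heq
  rw [hs.nhdsWithin_eq hx]
  by_cases hx' : f x = g x
  · filter_upwards [ODE_solution_unique_of_eventually_of_locallyLipschitz hv
      (eventually_of_mem (hs.mem_nhds hx) hf) (eventually_of_mem (hs.mem_nhds hx) hg) hx']
      with y hy
    simp [hx', hy]
  · filter_upwards [((hf x hx).continuousAt.ne_iff_eventually_ne (hg x hx).continuousAt).1 hx']
      with y hy
    simp [hx', hy]

theorem hasDerivAt_time_reversal {σ : E →L[ℝ] E} {v : E → E} (hσ : ∀ x, v (σ x) = -σ (v x))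
    {f : ℝ → E} {t : ℝ} (hf : HasDerivAt f (v (f (-t))) (-t)) :
    HasDerivAt (fun s => σ (f (-s))) (v (σ (f (-t)))) t := by
  have := σ.hasFDerivAt.comp_hasDerivAt t (hf.scomp t (hasDerivAt_neg t))
  simpa [Function.comp_def, hσ] using this

end ODE

theorem ContDiff.matrix_mul {l m n R E : Type*} [Fintype l] [Fintype m] [Fintype n]
    [NormedCommRing R] [NormedAlgebra ℝ R] [NormedAddCommGroup E] [NormedSpace ℝ E]
    {k : WithTop ℕ∞} {f : E → Matrix l m R} {g : E → Matrix m n R} (hf : ContDiff ℝ k f)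
    (hg : ContDiff ℝ k g) : ContDiff ℝ k (fun x => f x * g x) := by
  refine contDiff_pi.2 fun i => contDiff_pi.2 fun j => ?_
  simp only [mul_apply]
  exact ContDiff.sum fun r _ =>
    (contDiff_pi.1 (contDiff_pi.1 hf i) r).mul (contDiff_pi.1 (contDiff_pi.1 hg r) j)

noncomputable def Matrix.transposeCLM (m n 𝕜 R : Type*) [Fintype m] [Fintype n] [NormedField 𝕜]
    [NormedAddCommGroup R] [NormedSpace 𝕜 R] : Matrix m n R →L[𝕜] Matrix n m R :=
  (transposeLinearEquiv m n 𝕜 R).toLinearMap.mkContinuous 1 fun A => by simp [norm_transpose]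

section Nahm

variable {m : Type*} [Fintype m] {R : Type*}

abbrev MatrixTriple (m R : Type*) := Matrix m m R × Matrix m m R × Matrix m m R

def nahmField [CommRing R] (X : MatrixTriple m R) : MatrixTriple m R :=
  (⁅X.2.1, X.2.2⁆, ⁅X.2.2, X.1⁆, ⁅X.1, X.2.1⁆)

variable [NormedCommRing R] [NormedAlgebra ℝ R]

theorem contDiff_nahmField {k : WithTop ℕ∞} : ContDiff ℝ k (nahmField (m := m) (R := R)) := by
  have lie {f g : MatrixTriple m R → Matrix m m R} (hf : ContDiff ℝ k f) (hg : ContDiff ℝ k g) :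
      ContDiff ℝ k fun X => ⁅f X, g X⁆ := by
    simp only [Ring.lie_def]
    exact (hf.matrix_mul hg).sub (hg.matrix_mul hf)
  have h1 : ContDiff ℝ k fun X : MatrixTriple m R => X.1 := contDiff_fst
  have h2 : ContDiff ℝ k fun X : MatrixTriple m R => X.2.1 := contDiff_snd.fst
  have h3 : ContDiff ℝ k fun X : MatrixTriple m R => X.2.2 := contDiff_snd.snd
  exact (lie h2 h3).prodMk ((lie h3 h1).prodMk (lie h1 h2))

noncomputable def transposeTriple : MatrixTriple m R →L[ℝ] MatrixTriple m R :=
  (transposeCLM m m ℝ R).prodMap ((transposeCLM m m ℝ R).prodMap (transposeCLM m m ℝ R))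

@[simp]
theorem transposeTriple_apply (X : MatrixTriple m R) :
    transposeTriple X = (X.1ᵀ, X.2.1ᵀ, X.2.2ᵀ) :=
  rfl

theorem nahmField_transposeTriple (X : MatrixTriple m R) :
    nahmField (transposeTriple X) = -transposeTriple (nahmField X) := by
  simp [nahmField, Ring.lie_def, transpose_mul]

end Nahm

theorem nahm_symmetry_from_symmetric_initial_condition_general {n : ℕ} (a : ℝ) (ha : 0 < a)
    (T1 T2 T3 T1' T2' T3' : ℝ → Matrix (Fin n) (Fin n) ℂ)
    (hT1 : ∀ z ∈ Ioo (-a) a, ∀ i j, HasDerivAt (fun t => T1 t i j) (T1' z i j) z)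
    (hT2 : ∀ z ∈ Ioo (-a) a, ∀ i j, HasDerivAt (fun t => T2 t i j) (T2' z i j) z)
    (hT3 : ∀ z ∈ Ioo (-a) a, ∀ i j, HasDerivAt (fun t => T3 t i j) (T3' z i j) z)
    (hN1 : ∀ z ∈ Ioo (-a) a, T1' z = T2 z * T3 z - T3 z * T2 z)
    (hN2 : ∀ z ∈ Ioo (-a) a, T2' z = T3 z * T1 z - T1 z * T3 z)
    (hN3 : ∀ z ∈ Ioo (-a) a, T3' z = T1 z * T2 z - T2 z * T1 z)
    (hsym1 : T1 0 = (T1 0)ᵀ) (hsym2 : T2 0 = (T2 0)ᵀ) (hsym3 : T3 0 = (T3 0)ᵀ) :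
    ∀ z ∈ Ioo (-a) a,
      T1 (-z) = (T1 z)ᵀ ∧ T2 (-z) = (T2 z)ᵀ ∧ T3 (-z) = (T3 z)ᵀ := by
  set F : ℝ → MatrixTriple (Fin n) ℂ := fun z => (T1 z, T2 z, T3 z)
  have hF : ∀ z ∈ Ioo (-a) a, HasDerivAt F (nahmField (F z)) z := fun z hz => by
    have entrywise {T T' : ℝ → Matrix (Fin n) (Fin n) ℂ}
        (hT : ∀ i j, HasDerivAt (fun t => T t i j) (T' z i j) z) : HasDerivAt T (T' z) z :=
      hasDerivAt_pi.2 fun i => hasDerivAt_pi.2 fun j => hT i j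
    simp only [F, nahmField, Ring.lie_def, ← hN1 z hz, ← hN2 z hz, ← hN3 z hz]
    exact (entrywise (hT1 z hz)).prodMk ((entrywise (hT2 z hz)).prodMk (entrywise (hT3 z hz)))
  have hneg : ∀ z ∈ Ioo (-a) a, -z ∈ Ioo (-a) a := fun z hz => ⟨neg_lt_neg hz.2, by linarith [hz.1]⟩
  have hG : ∀ z ∈ Ioo (-a) a,
      HasDerivAt (fun z => transposeTriple (F (-z))) (nahmField (transposeTriple (F (-z)))) z :=
    fun z hz => hasDerivAt_time_reversal nahmField_transposeTriple (hF (-z) (hneg z hz))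
  have hFG0 : F 0 = transposeTriple (F (-0)) := by simp [F, ← hsym1, ← hsym2, ← hsym3]
  have hFG := ODE_solution_unique_of_isPreconnected contDiff_nahmField.locallyLipschitz
    isOpen_Ioo isPreconnected_Ioo hF hG ⟨neg_lt_zero.2 ha, ha⟩ hFG0
  intro z hz
  simpa [F] using hFG (hneg z hz)

/-- A C¹ solution of the reduced Nahm equations on `(-a, a)` whose value
at `0` is symmetric satisfies `Tᵢ(-z) = Tᵢ(z)ᵀ` throughout. -/
theorem nahm_symmetry_from_symmetric_initial_condition {n : ℕ} (a : ℝ) (ha : 0 < a)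
    (T1 T2 T3 T1' T2' T3' : ℝ → Matrix (Fin n) (Fin n) ℂ)
    (hT1 : ∀ z ∈ Ioo (-a) a, ∀ i j, HasDerivAt (fun t => T1 t i j) (T1' z i j) z)
    (hT2 : ∀ z ∈ Ioo (-a) a, ∀ i j, HasDerivAt (fun t => T2 t i j) (T2' z i j) z)
    (hT3 : ∀ z ∈ Ioo (-a) a, ∀ i j, HasDerivAt (fun t => T3 t i j) (T3' z i j) z)
    (hT1' : ∀ i j, ContinuousOn (fun z => T1' z i j) (Ioo (-a) a))
    (hT2' : ∀ i j, ContinuousOn (fun z => T2' z i j) (Ioo (-a) a))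
    (hT3' : ∀ i j, ContinuousOn (fun z => T3' z i j) (Ioo (-a) a))
    (hN1 : ∀ z ∈ Ioo (-a) a, T1' z = T2 z * T3 z - T3 z * T2 z)
    (hN2 : ∀ z ∈ Ioo (-a) a, T2' z = T3 z * T1 z - T1 z * T3 z)
    (hN3 : ∀ z ∈ Ioo (-a) a, T3' z = T1 z * T2 z - T2 z * T1 z)
    (hsym1 : T1 0 = (T1 0)ᵀ) (hsym2 : T2 0 = (T2 0)ᵀ) (hsym3 : T3 0 = (T3 0)ᵀ) :
    ∀ z ∈ Ioo (-a) a,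
      T1 (-z) = (T1 z)ᵀ ∧ T2 (-z) = (T2 z)ᵀ ∧ T3 (-z) = (T3 z)ᵀ :=
  nahm_symmetry_from_symmetric_initial_condition_general a ha T1 T2 T3 T1' T2' T3' hT1 hT2 hT3 hN1
    hN2 hN3 hsym1 hsym2 hsym3
end

section
/- Let $a<b$ be real and let $T_0,T_1,T_2,T_3:(a,b)\to M_n(\mathbb{C})$ be differentiable, skew-hermitian valued ($T_i(z)^* = -T_i(z)$), and satisfy Nahm's equations $T_i' + [T_0,T_i] = [T_j,T_k]$ for $(i,j,k)$ cyclic permutations of $(1,2,3)$. Let $\mu_0,x_0,x_1,x_2,x_3\in\mathbb{R}$ and set $\alpha = T_0 - iT_3$, $\beta = T_1+iT_2$, $w = x_1+ix_2$, $y = \mu_0 x_0 - ix_3$. For twice-differentiable $s:(a,b)\to\mathbb{C}^n$ define $D_1 s = \bigl(i(s' + (\alpha - iy)s),\ (-\beta + iw)s\bigr)$ and define the formal adjoint $D_1^\star(u_1,u_2) = i u_1' - i(\alpha - iy)^* u_1 + (-\beta + iw)^* u_2$, where $*$ is pointwise conjugate transpose. Then for all twice-differentiable $s$: $D_1^\star(D_1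 s) = -\bigl(\tfrac{d}{dz} + (T_0 - i\mu_0 x_0)\bigr)^2 s - \sum_{j=1}^3 (T_j - ix_j)^2 s$, where $(\tfrac{d}{dz}+\gamma)^2 s := (s'+\gamma s)' + \gamma(s'+\gamma s)$. -/
/-!
With `γ = T₀ - iμ₀x₀` and `Sⱼ = Tⱼ - ixⱼ` one has `α - iy = γ - iS₃` and `-β + iw = -(S₁ + iS₂)`,
all of `γ, Sⱼ` are skew-hermitian, and the scalar shifts do not change the commutators in Nahm's
equations. The first component of `D₁ s` is `i q + S₃ s` with `q = s' + γ s`, so differentiating it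
needs only `q'` and `S₃' = T₃'`. Expanding `D₁⋆ D₁ s`, everything except the claimed terms collects
into `i (T₃' + [γ, S₃] - [S₁, S₂]) s`, which vanishes by the third Nahm equation.
-/

open Matrix Set Complex

section Calculus

variable {𝕜 𝔸 : Type*} [NontriviallyNormedField 𝕜] [NormedRing 𝔸] [NormedAlgebra 𝕜 𝔸]
  {m n : Type*} {z : 𝕜}

theorem hasDerivAt_mulVec_apply [Fintype n] {M : 𝕜 → Matrix m n 𝔸} {M' : Matrix m n 𝔸}
    {v : 𝕜 → n → 𝔸} {v' : n → 𝔸} (hM : ∀ i j, HasDerivAt (fun t => M t i j) (M' i j) z)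
    (hv : ∀ j, HasDerivAt (fun t => v t j) (v' j) z) (i : m) :
    HasDerivAt (fun t => (M t *ᵥ v t) i) ((M' *ᵥ v z + M z *ᵥ v') i) z := by
  simpa [mulVec, dotProduct, Finset.sum_add_distrib] using
    HasDerivAt.fun_sum fun j _ => (hM i j).mul (hv j)

theorem hasDerivAt_sub_smul_one_apply [DecidableEq n] {M : 𝕜 → Matrix n n 𝔸}
    {M' : Matrix n n 𝔸} (hM : ∀ i j, HasDerivAt (fun t => M t i j) (M' i j) z) (c : 𝔸)
    (i j : n) : HasDerivAt (fun t => (M t - c • (1 : Matrix n n 𝔸)) i j) (M' i j) z := by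
  simpa only [Matrix.sub_apply] using (hM i j).sub_const _

end Calculus

section Algebra

variable {R : Type*} [Ring R]

theorem commutator_sub_smul_one {K : Type*} [CommRing K] [Algebra K R] (M N : R) (k l : K) :
    (M - k • 1) * (N - l • 1) - (N - l • 1) * (M - k • 1) = M * N - N * M := by
  simp only [mul_sub, sub_mul, smul_mul_assoc, mul_smul_comm, one_mul, mul_one]
  module

theorem weitzenbock_matrix_identity [Algebra ℂ R] (γ S₁ S₂ S₃ dS₃ : R)
    (hNahm : dS₃ + (γ * S₃ - S₃ * γ) = S₁ * S₂ - S₂ * S₁) :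
    I • dS₃ + (-γ - I • S₃) * (γ - I • S₃)
        - (S₁ - I • S₂) * (S₁ + I • S₂)
      = -(γ * γ) - S₁ * S₁ - S₂ * S₂ - S₃ * S₃ := by
  rw [eq_sub_of_add_eq hNahm]
  simp only [mul_sub, sub_mul, mul_add, neg_mul, smul_mul_assoc, mul_smul_comm,
    smul_smul, I_mul_I, neg_smul, one_smul, smul_sub]
  module

theorem weitzenbock_pointwise {n : Type*} [Fintype n] [DecidableEq n]
    {γ S₁ S₂ S₃ dS₃ : Matrix n n ℂ} (hγ : γᴴ = -γ) (h₁ : S₁ᴴ = -S₁) (h₂ : S₂ᴴ = -S₂)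
    (h₃ : S₃ᴴ = -S₃) (hNahm : dS₃ + (γ * S₃ - S₃ * γ) = S₁ * S₂ - S₂ * S₁) (s s' q' : n → ℂ) :
    I • (I • q' + (dS₃ *ᵥ s + S₃ *ᵥ s'))
        - I • ((γ - I • S₃)ᴴ *ᵥ (I • (s' + (γ - I • S₃) *ᵥ s)))
        + (-(S₁ + I • S₂))ᴴ *ᵥ (-(S₁ + I • S₂) *ᵥ s)
      = -(q' + γ *ᵥ (s' + γ *ᵥ s)) - (S₁ * S₁) *ᵥ s - (S₂ * S₂) *ᵥ s - (S₃ * S₃) *ᵥ s := by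
  have hA : (γ - I • S₃)ᴴ = -γ - I • S₃ := by
    simp only [conjTranspose_sub, conjTranspose_smul, hγ, h₃, star_def, conj_I]
    module
  have hB : (-(S₁ + I • S₂))ᴴ = S₁ - I • S₂ := by
    simp only [conjTranspose_neg, conjTranspose_add, conjTranspose_smul, h₁, h₂, star_def, conj_I]
    module
  rw [hA, hB]
  calc _ = -q' - γ *ᵥ s' + (I • dS₃ + (-γ - I • S₃) * (γ - I • S₃)
          - (S₁ - I • S₂) * (S₁ + I • S₂)) *ᵥ s := by
        simp only [mulVec_add, mulVec_sub, add_mulVec, sub_mulVec, neg_mulVec, mulVec_neg,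
          mulVec_smul, smul_mulVec, mul_sub, sub_mul, mul_add, neg_mul, smul_mul_assoc,
          mul_smul_comm, mulVec_mulVec]
        match_scalars <;> ring_nf <;> simp [I_sq]
    _ = _ := by
        rw [weitzenbock_matrix_identity _ _ _ _ _ hNahm]
        simp only [mulVec_add, sub_mulVec, neg_mulVec, mulVec_mulVec]
        module

theorem conjTranspose_sub_I_mul_smul_one {n : Type*} [DecidableEq n] {T : Matrix n n ℂ}
    (hT : Tᴴ = -T) (r : ℝ) :
    (T - (I * r) • (1 : Matrix n n ℂ))ᴴ = -(T - (I * r) • 1) := by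
  simp only [conjTranspose_sub, conjTranspose_smul, conjTranspose_one, hT, star_def,
    map_mul, conj_I, conj_ofReal]
  module

end Algebra

theorem weitzenbock_identity_general {n : ℕ} (a b : ℝ)
    (T0 T1 T2 T3 T1' T2' T3' : ℝ → Matrix (Fin n) (Fin n) ℂ)
    (hT3 : ∀ z ∈ Ioo a b, ∀ i j, HasDerivAt (fun t => T3 t i j) (T3' z i j) z)
    (hskew : ∀ z ∈ Ioo a b,
        (T0 z)ᴴ = -T0 z ∧ (T1 z)ᴴ = -T1 z ∧ (T2 z)ᴴ = -T2 z ∧ (T3 z)ᴴ = -T3 z)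
    (hNahm : ∀ z ∈ Ioo a b,
        T1' z + (T0 z * T1 z - T1 z * T0 z) = T2 z * T3 z - T3 z * T2 z ∧
        T2' z + (T0 z * T2 z - T2 z * T0 z) = T3 z * T1 z - T1 z * T3 z ∧
        T3' z + (T0 z * T3 z - T3 z * T0 z) = T1 z * T2 z - T2 z * T1 z)
    (μ0 x0 x1 x2 x3 : ℝ)
    (s s' : ℝ → Fin n → ℂ)
    (hs : ∀ z ∈ Ioo a b, ∀ i, HasDerivAt (fun t => s t i) (s' z i) z)
    -- `u1'` is the derivative of `u₁ = i(s' + (α - iy)s)`, the first component of `D₁ s`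
    (u1' : ℝ → Fin n → ℂ)
    (hu1 : ∀ z ∈ Ioo a b, ∀ i, HasDerivAt
        (fun t => (Complex.I • (s' t
            + ((T0 t - Complex.I • T3 t)
                - (Complex.I * (((μ0 * x0 : ℝ) : ℂ) - Complex.I * ((x3 : ℝ) : ℂ)))
                    • (1 : Matrix (Fin n) (Fin n) ℂ)).mulVec (s t))) i)
        (u1' z i) z)
    -- `q'` is the derivative of `q = s' + γ s`, where `γ = T0 - iμ0x0`
    (q' : ℝ → Fin n → ℂ)
    (hq : ∀ z ∈ Ioo a b, ∀ i, HasDerivAt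
        (fun t => (s' t
            + (T0 t - (Complex.I * ((μ0 * x0 : ℝ) : ℂ))
                • (1 : Matrix (Fin n) (Fin n) ℂ)).mulVec (s t)) i)
        (q' z i) z) :
    ∀ z ∈ Ioo a b,
      Complex.I • u1' z
        - Complex.I • ((((T0 z - Complex.I • T3 z)
            - (Complex.I * (((μ0 * x0 : ℝ) : ℂ) - Complex.I * ((x3 : ℝ) : ℂ)))
                • (1 : Matrix (Fin n) (Fin n) ℂ))ᴴ).mulVec
            (Complex.I • (s' z
              + ((T0 z - Complex.I • T3 z)
                  - (Complex.I * (((μ0 * x0 : ℝ) : ℂ) - Complex.I * ((x3 : ℝ) : ℂ)))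
                      • (1 : Matrix (Fin n) (Fin n) ℂ)).mulVec (s z))))
        + ((-(T1 z + Complex.I • T2 z)
              + (Complex.I * (((x1 : ℝ) : ℂ) + Complex.I * ((x2 : ℝ) : ℂ)))
                  • (1 : Matrix (Fin n) (Fin n) ℂ))ᴴ).mulVec
            ((-(T1 z + Complex.I • T2 z)
              + (Complex.I * (((x1 : ℝ) : ℂ) + Complex.I * ((x2 : ℝ) : ℂ)))
                  • (1 : Matrix (Fin n) (Fin n) ℂ)).mulVec (s z))
      = -(q' z + (T0 z - (Complex.I * ((μ0 * x0 : ℝ) : ℂ))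
              • (1 : Matrix (Fin n) (Fin n) ℂ)).mulVec
            (s' z + (T0 z - (Complex.I * ((μ0 * x0 : ℝ) : ℂ))
              • (1 : Matrix (Fin n) (Fin n) ℂ)).mulVec (s z)))
        - ((T1 z - (Complex.I * ((x1 : ℝ) : ℂ)) • (1 : Matrix (Fin n) (Fin n) ℂ))
            * (T1 z - (Complex.I * ((x1 : ℝ) : ℂ)) • (1 : Matrix (Fin n) (Fin n) ℂ))).mulVec (s z)
        - ((T2 z - (Complex.I * ((x2 : ℝ) : ℂ)) • (1 : Matrix (Fin n) (Fin n) ℂ))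
            * (T2 z - (Complex.I * ((x2 : ℝ) : ℂ)) • (1 : Matrix (Fin n) (Fin n) ℂ))).mulVec (s z)
        - ((T3 z - (Complex.I * ((x3 : ℝ) : ℂ)) • (1 : Matrix (Fin n) (Fin n) ℂ))
            * (T3 z - (Complex.I * ((x3 : ℝ) : ℂ)) • (1 : Matrix (Fin n) (Fin n) ℂ))).mulVec (s z) := by
  intro z hz
  obtain ⟨h0, h1, h2, h3⟩ := hskew z hz
  have hα : ∀ t, (T0 t - I • T3 t) - (I * (((μ0 * x0 : ℝ) : ℂ) - I * x3)) • 1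
      = (T0 t - (I * ((μ0 * x0 : ℝ) : ℂ)) • 1) - I • (T3 t - (I * x3) • 1) := fun t => by
    match_scalars <;> ring
  have hβ : -(T1 z + I • T2 z) + (I * (x1 + I * x2)) • 1
      = -((T1 z - (I * x1) • 1) + I • (T2 z - (I * x2) • 1)) := by
    match_scalars <;> ring
  have hu1_eq : ∀ t,
      I • (s' t + ((T0 t - I • T3 t) - (I * (((μ0 * x0 : ℝ) : ℂ) - I * x3)) • 1) *ᵥ s t)
        = I • (s' t + (T0 t - (I * ((μ0 * x0 : ℝ) : ℂ)) • 1) *ᵥ s t)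
          + (T3 t - (I * x3) • 1) *ᵥ s t := by
    intro t
    rw [hα, sub_mulVec, smul_mulVec, ← add_sub_assoc, smul_sub, smul_smul, I_mul_I,
      neg_one_smul, sub_neg_eq_add]
  have hu1' : u1' z = I • q' z + (T3' z *ᵥ s z + (T3 z - (I * x3) • 1) *ᵥ s' z) := by
    funext i
    refine (hu1 z hz i).unique ?_
    simp only [hu1_eq]
    exact ((hq z hz i).const_mul I).add
      (hasDerivAt_mulVec_apply (hasDerivAt_sub_smul_one_apply (hT3 z hz) (I * x3)) (hs z hz) i)
  rw [hα, hβ, hu1']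
  refine weitzenbock_pointwise (conjTranspose_sub_I_mul_smul_one h0 _)
    (conjTranspose_sub_I_mul_smul_one h1 _) (conjTranspose_sub_I_mul_smul_one h2 _)
    (conjTranspose_sub_I_mul_smul_one h3 _) ?_ _ _ _
  rw [commutator_sub_smul_one, commutator_sub_smul_one]
  exact (hNahm z hz).2.2

/-- Weitzenböck identity. For a skew-hermitian solution of Nahm's
equations, with `α = T0 - iT3`, `β = T1 + iT2`, `w = x1 + ix2`, `y = μ0x0 - ix3`,
`γ = T0 - iμ0x0`, and `D₁ s = (u₁, u₂) = (i(s' + (α - iy)s), (-β + iw)s)`, one has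
`D₁⋆(D₁ s) = i u₁' - i(α - iy)ᴴ u₁ + (-β + iw)ᴴ u₂
          = -((d/dz + γ)² s) - Σⱼ (Tⱼ - ixⱼ)² s`,
where `(d/dz + γ)² s = q' + γ q` with `q = s' + γ s`. -/
theorem weitzenbock_identity {n : ℕ} (a b : ℝ) (hab : a < b)
    (T0 T1 T2 T3 T0' T1' T2' T3' : ℝ → Matrix (Fin n) (Fin n) ℂ)
    (hT0 : ∀ z ∈ Ioo a b, ∀ i j, HasDerivAt (fun t => T0 t i j) (T0' z i j) z)
    (hT1 : ∀ z ∈ Ioo a b, ∀ i j, HasDerivAt (fun t => T1 t i j) (T1' z i j) z)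
    (hT2 : ∀ z ∈ Ioo a b, ∀ i j, HasDerivAt (fun t => T2 t i j) (T2' z i j) z)
    (hT3 : ∀ z ∈ Ioo a b, ∀ i j, HasDerivAt (fun t => T3 t i j) (T3' z i j) z)
    (hskew : ∀ z ∈ Ioo a b,
        (T0 z)ᴴ = -T0 z ∧ (T1 z)ᴴ = -T1 z ∧ (T2 z)ᴴ = -T2 z ∧ (T3 z)ᴴ = -T3 z)
    (hNahm : ∀ z ∈ Ioo a b,
        T1' z + (T0 z * T1 z - T1 z * T0 z) = T2 z * T3 z - T3 z * T2 z ∧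
        T2' z + (T0 z * T2 z - T2 z * T0 z) = T3 z * T1 z - T1 z * T3 z ∧
        T3' z + (T0 z * T3 z - T3 z * T0 z) = T1 z * T2 z - T2 z * T1 z)
    (μ0 x0 x1 x2 x3 : ℝ)
    (s s' s'' : ℝ → Fin n → ℂ)
    (hs : ∀ z ∈ Ioo a b, ∀ i, HasDerivAt (fun t => s t i) (s' z i) z)
    (hs' : ∀ z ∈ Ioo a b, ∀ i, HasDerivAt (fun t => s' t i) (s'' z i) z)
    -- `u1'` is the derivative of `u₁ = i(s' + (α - iy)s)`, the first component of `D₁ s`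
    (u1' : ℝ → Fin n → ℂ)
    (hu1 : ∀ z ∈ Ioo a b, ∀ i, HasDerivAt
        (fun t => (Complex.I • (s' t
            + ((T0 t - Complex.I • T3 t)
                - (Complex.I * (((μ0 * x0 : ℝ) : ℂ) - Complex.I * ((x3 : ℝ) : ℂ)))
                    • (1 : Matrix (Fin n) (Fin n) ℂ)).mulVec (s t))) i)
        (u1' z i) z)
    -- `q'` is the derivative of `q = s' + γ s`, where `γ = T0 - iμ0x0`
    (q' : ℝ → Fin n → ℂ)
    (hq : ∀ z ∈ Ioo a b, ∀ i, HasDerivAt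
        (fun t => (s' t
            + (T0 t - (Complex.I * ((μ0 * x0 : ℝ) : ℂ))
                • (1 : Matrix (Fin n) (Fin n) ℂ)).mulVec (s t)) i)
        (q' z i) z) :
    ∀ z ∈ Ioo a b,
      Complex.I • u1' z
        - Complex.I • ((((T0 z - Complex.I • T3 z)
            - (Complex.I * (((μ0 * x0 : ℝ) : ℂ) - Complex.I * ((x3 : ℝ) : ℂ)))
                • (1 : Matrix (Fin n) (Fin n) ℂ))ᴴ).mulVec
            (Complex.I • (s' z
              + ((T0 z - Complex.I • T3 z)
                  - (Complex.I * (((μ0 * x0 : ℝ) : ℂ) - Complex.I * ((x3 : ℝ) : ℂ)))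
                      • (1 : Matrix (Fin n) (Fin n) ℂ)).mulVec (s z))))
        + ((-(T1 z + Complex.I • T2 z)
              + (Complex.I * (((x1 : ℝ) : ℂ) + Complex.I * ((x2 : ℝ) : ℂ)))
                  • (1 : Matrix (Fin n) (Fin n) ℂ))ᴴ).mulVec
            ((-(T1 z + Complex.I • T2 z)
              + (Complex.I * (((x1 : ℝ) : ℂ) + Complex.I * ((x2 : ℝ) : ℂ)))
                  • (1 : Matrix (Fin n) (Fin n) ℂ)).mulVec (s z))
      = -(q' z + (T0 z - (Complex.I * ((μ0 * x0 : ℝ) : ℂ))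
              • (1 : Matrix (Fin n) (Fin n) ℂ)).mulVec
            (s' z + (T0 z - (Complex.I * ((μ0 * x0 : ℝ) : ℂ))
              • (1 : Matrix (Fin n) (Fin n) ℂ)).mulVec (s z)))
        - ((T1 z - (Complex.I * ((x1 : ℝ) : ℂ)) • (1 : Matrix (Fin n) (Fin n) ℂ))
            * (T1 z - (Complex.I * ((x1 : ℝ) : ℂ)) • (1 : Matrix (Fin n) (Fin n) ℂ))).mulVec (s z)
        - ((T2 z - (Complex.I * ((x2 : ℝ) : ℂ)) • (1 : Matrix (Fin n) (Fin n) ℂ))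
            * (T2 z - (Complex.I * ((x2 : ℝ) : ℂ)) • (1 : Matrix (Fin n) (Fin n) ℂ))).mulVec (s z)
        - ((T3 z - (Complex.I * ((x3 : ℝ) : ℂ)) • (1 : Matrix (Fin n) (Fin n) ℂ))
            * (T3 z - (Complex.I * ((x3 : ℝ) : ℂ)) • (1 : Matrix (Fin n) (Fin n) ℂ))).mulVec (s z) :=
  weitzenbock_identity_general a b T0 T1 T2 T3 T1' T2' T3' hT3 hskew hNahm μ0 x0 x1 x2 x3 s s' hs
    u1' hu1 q' hq
end

section
/- Let $a<b$ be real, let $T_0:(a,b)\to M_n(\mathbb{C})$ be differentiable and $T_1,T_2,T_3:(a,b)\to M_n(\mathbb{C})$ be continuous, all skew-hermitian valued. Let $c,x_1,x_2,x_3\in\mathbb{R}$ and set $\gamma(z) = T_0(z) - ic$. Suppose $v:(a,b)\to\mathbb{C}^n$ is twice differentiable and satisfies $\bigl(\tfrac{d}{dz}+\gamma\bigr)^2 v + \sum_{j=1}^3 (T_j - ix_j)^2 v = 0$, where $(\tfrac{d}{dz}+\gamma)^2 v := (v'+\gamma v)' + \gamma(v'+\gamma v)$. Then for all $z\in(a,b)$: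 $\frac{d^2}{dz^2}\|v(z)\|^2 = 2\|v'(z)+\gamma(z)v(z)\|^2 + 2\sum_{j=1}^3\|(T_j(z)-ix_j)v(z)\|^2 \ge 0$; in particular $z\mapsto\|v(z)\|^2$ is convex. -/
/-!
Write `w = v' + γ v` and `⟪x, y⟫ = Re (x* y)`. Then `(‖v‖²)'' = 2 (‖v'‖² + ⟪v, v''⟫)`. Pairing the
equation with `v` and using that `T₀'`, `γ` and `Tⱼ - i xⱼ` are skew-hermitian (so `⟪x, M x⟫ = 0`,
`⟪x, M y⟫ = -⟪M x, y⟫` and `⟪x, M² x⟫ = -‖M x‖²`) turns `‖v'‖² + ⟪v, v''⟫` into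
`‖w‖² + Σⱼ ‖(Tⱼ - i xⱼ) v‖² ≥ 0`, and a function with nonnegative second derivative is convex.
-/

open Matrix Set Filter Topology

theorem convexOn_of_hasDerivAt_deriv_nonneg {s : Set ℝ} (hs : IsOpen s) (hconv : Convex ℝ s)
    {f f'' : ℝ → ℝ} (hf : ∀ z ∈ s, DifferentiableAt ℝ f z)
    (hf'' : ∀ z ∈ s, HasDerivAt (deriv f) (f'' z) z ∧ 0 ≤ f'' z) : ConvexOn ℝ s f := by
  refine convexOn_of_hasDerivWithinAt2_nonneg hconv (f' := deriv f) (f'' := f'')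
    (fun z hz => (hf z hz).continuousAt.continuousWithinAt) ?_ ?_ ?_ <;> rw [hs.interior_eq]
  · exact fun z hz => (hf z hz).hasDerivAt.hasDerivWithinAt
  · exact fun z hz => (hf'' z hz).1.hasDerivWithinAt
  · exact fun z hz => (hf'' z hz).2

section

variable {ι : Type*}

theorem conjTranspose_sub_I_mul_smul_one_eq_neg [DecidableEq ι] {M : Matrix ι ι ℂ} (hM : Mᴴ = -M)
    (x : ℝ) : (M - (Complex.I * x) • (1 : Matrix ι ι ℂ))ᴴ = -(M - (Complex.I * x) • 1) := by
  rw [conjTranspose_sub, hM, conjTranspose_smul, conjTranspose_one, neg_sub]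
  simp [sub_eq_add_neg, add_comm]

theorem conjTranspose_eq_neg_of_hasDerivAt {T : ℝ → Matrix ι ι ℂ} {T' : Matrix ι ι ℂ} {z : ℝ}
    (hT : ∀ i j, HasDerivAt (fun t => T t i j) (T' i j) z)
    (hskew : ∀ᶠ t in 𝓝 z, (T t)ᴴ = -T t) : T'ᴴ = -T' := by
  ext i j
  have hconj : HasDerivAt (fun t => -T t i j) (star (T' j i)) z := by
    refine (hT j i).star.congr_of_eventuallyEq ?_
    filter_upwards [hskew] with t ht
    simpa using (congrFun (congrFun ht i) j).symm
  simpa using hconj.unique (hT i j).neg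

variable [Fintype ι]

theorem re_star_dotProduct_comm (x y : ι → ℂ) : (star x ⬝ᵥ y).re = (star y ⬝ᵥ x).re := by
  rw [star_dotProduct, ← Complex.conj_re]; rfl

theorem sum_normSq_eq_re_star_dotProduct (x : ι → ℂ) :
    ∑ i, Complex.normSq (x i) = (star x ⬝ᵥ x).re := by
  simp [dotProduct, Complex.re_sum, Complex.normSq_apply, Complex.mul_re]

theorem star_dotProduct_mulVec_of_skew {M : Matrix ι ι ℂ} (hM : Mᴴ = -M) (x y : ι → ℂ) :
    star x ⬝ᵥ (M *ᵥ y) = -(star (M *ᵥ x) ⬝ᵥ y) := by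
  rw [star_mulVec, hM, dotProduct_mulVec, vecMul_neg, neg_dotProduct, neg_neg]

theorem re_star_dotProduct_mulVec_self_of_skew {M : Matrix ι ι ℂ} (hM : Mᴴ = -M) (x : ι → ℂ) :
    (star x ⬝ᵥ (M *ᵥ x)).re = 0 := by
  have h := congrArg Complex.re (star_dotProduct_mulVec_of_skew hM x x)
  rw [Complex.neg_re, re_star_dotProduct_comm (M *ᵥ x)] at h
  linarith

theorem re_star_dotProduct_mul_self_mulVec_of_skew {M : Matrix ι ι ℂ} (hM : Mᴴ = -M)
    (x : ι → ℂ) : (star x ⬝ᵥ ((M * M) *ᵥ x)).re = -∑ i, Complex.normSq ((M *ᵥ x) i) := by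
  rw [← mulVec_mulVec, star_dotProduct_mulVec_of_skew hM, Complex.neg_re,
    sum_normSq_eq_re_star_dotProduct]

theorem re_star_dotProduct_add_eq_of_nahm {κ : Type*} [Fintype κ]
    {γ' γ : Matrix ι ι ℂ} {A : κ → Matrix ι ι ℂ}
    (hγ' : γ'ᴴ = -γ') (hγ : γᴴ = -γ) (hA : ∀ k, (A k)ᴴ = -A k) {u u' u'' : ι → ℂ}
    (hode : (u'' + γ' *ᵥ u + γ *ᵥ u') + γ *ᵥ (u' + γ *ᵥ u) + ∑ k, (A k * A k) *ᵥ u = 0) :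
    (star u' ⬝ᵥ u').re + (star u ⬝ᵥ u'').re =
      ∑ i, Complex.normSq ((u' + γ *ᵥ u) i) + ∑ k, ∑ i, Complex.normSq ((A k *ᵥ u) i) := by
  have h := congrArg (fun y => (star u ⬝ᵥ y).re) hode
  simp only [dotProduct_add, dotProduct_sum, Complex.add_re, Complex.re_sum,
    dotProduct_zero, Complex.zero_re, re_star_dotProduct_mulVec_self_of_skew hγ',
    re_star_dotProduct_mul_self_mulVec_of_skew (hA _), Finset.sum_neg_distrib] at h
  have hγu' := congrArg Complex.re (star_dotProduct_mulVec_of_skew hγ u u')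
  have hγw := congrArg Complex.re (star_dotProduct_mulVec_of_skew hγ u (u' + γ *ᵥ u))
  simp only [Complex.neg_re, dotProduct_add, Complex.add_re] at hγu' hγw
  rw [sum_normSq_eq_re_star_dotProduct, star_add, add_dotProduct, dotProduct_add,
    dotProduct_add, Complex.add_re, Complex.add_re, Complex.add_re,
    re_star_dotProduct_comm u' (γ *ᵥ u)]
  linarith

theorem HasDerivAt.re_star_dotProduct {u w : ℝ → ι → ℂ} {u' w' : ι → ℂ} {z : ℝ}
    (hu : HasDerivAt u u' z) (hw : HasDerivAt w w' z) :
    HasDerivAt (fun t => (star (u t) ⬝ᵥ w t).re)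
      ((star u' ⬝ᵥ w z).re + (star (u z) ⬝ᵥ w').re) z := by
  have hdot : HasDerivAt (fun t => star (u t) ⬝ᵥ w t) (star u' ⬝ᵥ w z + star (u z) ⬝ᵥ w') z := by
    simp only [dotProduct, Pi.star_apply, ← Finset.sum_add_distrib]
    exact HasDerivAt.fun_sum fun i _ =>
      ((hasDerivAt_pi.1 hu i).star).mul (hasDerivAt_pi.1 hw i)
  rw [← Complex.add_re]
  exact Complex.reCLM.hasFDerivAt.comp_hasDerivAt z hdot

theorem HasDerivAt.sum_normSq {v : ℝ → ι → ℂ} {v' : ι → ℂ} {z : ℝ} (hv : HasDerivAt v v' z) :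
    HasDerivAt (fun t => ∑ i, Complex.normSq (v t i)) (2 * (star (v z) ⬝ᵥ v').re) z := by
  simp only [sum_normSq_eq_re_star_dotProduct]
  convert hv.re_star_dotProduct hv using 1
  rw [re_star_dotProduct_comm v']
  ring

theorem hasDerivAt_deriv_sum_normSq {v v' v'' : ℝ → ι → ℂ} {s : Set ℝ} (hs : IsOpen s)
    (hv : ∀ z ∈ s, HasDerivAt v (v' z) z) (hv' : ∀ z ∈ s, HasDerivAt v' (v'' z) z)
    {z : ℝ} (hz : z ∈ s) :
    HasDerivAt (deriv fun t => ∑ i, Complex.normSq (v t i))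
      (2 * ((star (v' z) ⬝ᵥ v' z).re + (star (v z) ⬝ᵥ v'' z).re)) z := by
  have hderiv : (deriv fun t => ∑ i, Complex.normSq (v t i)) =ᶠ[𝓝 z]
      fun t => 2 * (star (v t) ⬝ᵥ v' t).re := by
    filter_upwards [hs.mem_nhds hz] with t ht using (hv t ht).sum_normSq.deriv
  exact (((hv z hz).re_star_dotProduct (hv' z hz)).const_mul 2).congr_of_eventuallyEq hderiv

theorem hasDerivAt_deriv_sum_normSq_of_nahm {κ : Type*} [Fintype κ] {s : Set ℝ} (hs : IsOpen s)
    {v v' v'' : ℝ → ι → ℂ} (hv : ∀ z ∈ s, HasDerivAt v (v' z) z)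
    (hv' : ∀ z ∈ s, HasDerivAt v' (v'' z) z) {z : ℝ} (hz : z ∈ s)
    {γ' γ : Matrix ι ι ℂ} {A : κ → Matrix ι ι ℂ}
    (hγ' : γ'ᴴ = -γ') (hγ : γᴴ = -γ) (hA : ∀ k, (A k)ᴴ = -A k)
    (hode : (v'' z + γ' *ᵥ v z + γ *ᵥ v' z) + γ *ᵥ (v' z + γ *ᵥ v z)
      + ∑ k, (A k * A k) *ᵥ v z = 0) :
    HasDerivAt (deriv fun t => ∑ i, Complex.normSq (v t i))
      (2 * ∑ i, Complex.normSq ((v' z + γ *ᵥ v z) i)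
        + 2 * ∑ k, ∑ i, Complex.normSq ((A k *ᵥ v z) i)) z ∧
    0 ≤ 2 * ∑ i, Complex.normSq ((v' z + γ *ᵥ v z) i)
        + 2 * ∑ k, ∑ i, Complex.normSq ((A k *ᵥ v z) i) := by
  have hnonneg (x : ι → ℂ) : 0 ≤ ∑ i, Complex.normSq (x i) :=
    Finset.sum_nonneg fun i _ => Complex.normSq_nonneg _
  refine ⟨?_, add_nonneg (by linarith [hnonneg (v' z + γ *ᵥ v z)])
    (mul_nonneg zero_le_two (Finset.sum_nonneg fun k _ => hnonneg _))⟩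
  convert hasDerivAt_deriv_sum_normSq hs hv hv' hz using 1
  rw [re_star_dotProduct_add_eq_of_nahm hγ' hγ hA hode]
  ring

end

theorem norm_squared_convexity_general {n : ℕ} (a b : ℝ)
    (T0 T0' T1 T2 T3 : ℝ → Matrix (Fin n) (Fin n) ℂ)
    (hT0 : ∀ z ∈ Ioo a b, ∀ i j, HasDerivAt (fun t => T0 t i j) (T0' z i j) z)
    (hskew : ∀ z ∈ Ioo a b,
        (T0 z)ᴴ = -T0 z ∧ (T1 z)ᴴ = -T1 z ∧ (T2 z)ᴴ = -T2 z ∧ (T3 z)ᴴ = -T3 z)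
    (c x1 x2 x3 : ℝ)
    (v v' v'' : ℝ → Fin n → ℂ)
    (hv : ∀ z ∈ Ioo a b, ∀ i, HasDerivAt (fun t => v t i) (v' z i) z)
    (hv' : ∀ z ∈ Ioo a b, ∀ i, HasDerivAt (fun t => v' t i) (v'' z i) z)
    (hode : ∀ z ∈ Ioo a b,
        (v'' z + (T0' z).mulVec (v z)
            + (T0 z - (Complex.I * ((c : ℝ) : ℂ))
                • (1 : Matrix (Fin n) (Fin n) ℂ)).mulVec (v' z))
          + (T0 z - (Complex.I * ((c : ℝ) : ℂ))
                • (1 : Matrix (Fin n) (Fin n) ℂ)).mulVec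
              (v' z + (T0 z - (Complex.I * ((c : ℝ) : ℂ))
                • (1 : Matrix (Fin n) (Fin n) ℂ)).mulVec (v z))
          + ((T1 z - (Complex.I * ((x1 : ℝ) : ℂ)) • (1 : Matrix (Fin n) (Fin n) ℂ))
              * (T1 z - (Complex.I * ((x1 : ℝ) : ℂ)) • (1 : Matrix (Fin n) (Fin n) ℂ))).mulVec (v z)
          + ((T2 z - (Complex.I * ((x2 : ℝ) : ℂ)) • (1 : Matrix (Fin n) (Fin n) ℂ))
              * (T2 z - (Complex.I * ((x2 : ℝ) : ℂ)) • (1 : Matrix (Fin n) (Fin n) ℂ))).mulVec (v z)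
          + ((T3 z - (Complex.I * ((x3 : ℝ) : ℂ)) • (1 : Matrix (Fin n) (Fin n) ℂ))
              * (T3 z - (Complex.I * ((x3 : ℝ) : ℂ)) • (1 : Matrix (Fin n) (Fin n) ℂ))).mulVec (v z)
          = 0) :
    (∀ z ∈ Ioo a b,
      HasDerivAt (deriv (fun t => ∑ i, Complex.normSq (v t i)))
        (2 * (∑ i, Complex.normSq
            ((v' z + (T0 z - (Complex.I * ((c : ℝ) : ℂ))
                • (1 : Matrix (Fin n) (Fin n) ℂ)).mulVec (v z)) i))
          + 2 * ((∑ i, Complex.normSq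
                (((T1 z - (Complex.I * ((x1 : ℝ) : ℂ))
                  • (1 : Matrix (Fin n) (Fin n) ℂ)).mulVec (v z)) i))
              + (∑ i, Complex.normSq
                (((T2 z - (Complex.I * ((x2 : ℝ) : ℂ))
                  • (1 : Matrix (Fin n) (Fin n) ℂ)).mulVec (v z)) i))
              + (∑ i, Complex.normSq
                (((T3 z - (Complex.I * ((x3 : ℝ) : ℂ))
                  • (1 : Matrix (Fin n) (Fin n) ℂ)).mulVec (v z)) i)))) z
      ∧ 0 ≤ 2 * (∑ i, Complex.normSq
            ((v' z + (T0 z - (Complex.I * ((c : ℝ) : ℂ))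
                • (1 : Matrix (Fin n) (Fin n) ℂ)).mulVec (v z)) i))
          + 2 * ((∑ i, Complex.normSq
                (((T1 z - (Complex.I * ((x1 : ℝ) : ℂ))
                  • (1 : Matrix (Fin n) (Fin n) ℂ)).mulVec (v z)) i))
              + (∑ i, Complex.normSq
                (((T2 z - (Complex.I * ((x2 : ℝ) : ℂ))
                  • (1 : Matrix (Fin n) (Fin n) ℂ)).mulVec (v z)) i))
              + (∑ i, Complex.normSq
                (((T3 z - (Complex.I * ((x3 : ℝ) : ℂ))
                  • (1 : Matrix (Fin n) (Fin n) ℂ)).mulVec (v z)) i)))) ∧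
    ConvexOn ℝ (Ioo a b) (fun t => ∑ i, Complex.normSq (v t i)) := by
  have hvd : ∀ z ∈ Ioo a b, HasDerivAt v (v' z) z := fun z hz => hasDerivAt_pi.2 (hv z hz)
  have hvd' : ∀ z ∈ Ioo a b, HasDerivAt v' (v'' z) z := fun z hz => hasDerivAt_pi.2 (hv' z hz)
  let A (z : ℝ) : Fin 3 → Matrix (Fin n) (Fin n) ℂ := ![T1 z - (Complex.I * x1) • 1,
    T2 z - (Complex.I * x2) • 1, T3 z - (Complex.I * x3) • 1]
  have hsecond : ∀ z ∈ Ioo a b, _ := fun z hz => by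
    obtain ⟨h0, h1, h2, h3⟩ := hskew z hz
    have hT0' : (T0' z)ᴴ = -T0' z := conjTranspose_eq_neg_of_hasDerivAt (hT0 z hz)
      (by filter_upwards [isOpen_Ioo.mem_nhds hz] with t ht using (hskew t ht).1)
    exact hasDerivAt_deriv_sum_normSq_of_nahm isOpen_Ioo hvd hvd' hz hT0'
      (conjTranspose_sub_I_mul_smul_one_eq_neg h0 c)
      (A := A z) (fun k => by fin_cases k <;> exact conjTranspose_sub_I_mul_smul_one_eq_neg ‹_› _)
      (by simpa [A, Fin.sum_univ_three, add_assoc] using hode z hz)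
  refine ⟨fun z hz => by simpa [A, Fin.sum_univ_three] using hsecond z hz, ?_⟩
  exact convexOn_of_hasDerivAt_deriv_nonneg isOpen_Ioo (convex_Ioo a b)
    (fun z hz => (hvd z hz).sum_normSq.differentiableAt) hsecond

/-- Convexity of `‖v‖²` for solutions of `D₁*D₁ v = 0`. With
`γ = T0 - ic` and skew-hermitian `T0, T1, T2, T3`, any solution of
`(v' + γv)' + γ(v' + γv) + Σⱼ (Tⱼ - ixⱼ)² v = 0` satisfies
`(d²/dz²)‖v‖² = 2‖v' + γv‖² + 2Σⱼ‖(Tⱼ - ixⱼ)v‖² ≥ 0`, so `‖v‖²` is convex. -/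
theorem norm_squared_convexity {n : ℕ} (a b : ℝ) (hab : a < b)
    (T0 T0' T1 T2 T3 : ℝ → Matrix (Fin n) (Fin n) ℂ)
    (hT0 : ∀ z ∈ Ioo a b, ∀ i j, HasDerivAt (fun t => T0 t i j) (T0' z i j) z)
    (hT1 : ∀ i j, ContinuousOn (fun z => T1 z i j) (Ioo a b))
    (hT2 : ∀ i j, ContinuousOn (fun z => T2 z i j) (Ioo a b))
    (hT3 : ∀ i j, ContinuousOn (fun z => T3 z i j) (Ioo a b))
    (hskew : ∀ z ∈ Ioo a b,
        (T0 z)ᴴ = -T0 z ∧ (T1 z)ᴴ = -T1 z ∧ (T2 z)ᴴ = -T2 z ∧ (T3 z)ᴴ = -T3 z)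
    (c x1 x2 x3 : ℝ)
    (v v' v'' : ℝ → Fin n → ℂ)
    (hv : ∀ z ∈ Ioo a b, ∀ i, HasDerivAt (fun t => v t i) (v' z i) z)
    (hv' : ∀ z ∈ Ioo a b, ∀ i, HasDerivAt (fun t => v' t i) (v'' z i) z)
    (hode : ∀ z ∈ Ioo a b,
        (v'' z + (T0' z).mulVec (v z)
            + (T0 z - (Complex.I * ((c : ℝ) : ℂ))
                • (1 : Matrix (Fin n) (Fin n) ℂ)).mulVec (v' z))
          + (T0 z - (Complex.I * ((c : ℝ) : ℂ))
                • (1 : Matrix (Fin n) (Fin n) ℂ)).mulVec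
              (v' z + (T0 z - (Complex.I * ((c : ℝ) : ℂ))
                • (1 : Matrix (Fin n) (Fin n) ℂ)).mulVec (v z))
          + ((T1 z - (Complex.I * ((x1 : ℝ) : ℂ)) • (1 : Matrix (Fin n) (Fin n) ℂ))
              * (T1 z - (Complex.I * ((x1 : ℝ) : ℂ)) • (1 : Matrix (Fin n) (Fin n) ℂ))).mulVec (v z)
          + ((T2 z - (Complex.I * ((x2 : ℝ) : ℂ)) • (1 : Matrix (Fin n) (Fin n) ℂ))
              * (T2 z - (Complex.I * ((x2 : ℝ) : ℂ)) • (1 : Matrix (Fin n) (Fin n) ℂ))).mulVec (v z)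
          + ((T3 z - (Complex.I * ((x3 : ℝ) : ℂ)) • (1 : Matrix (Fin n) (Fin n) ℂ))
              * (T3 z - (Complex.I * ((x3 : ℝ) : ℂ)) • (1 : Matrix (Fin n) (Fin n) ℂ))).mulVec (v z)
          = 0) :
    (∀ z ∈ Ioo a b,
      HasDerivAt (deriv (fun t => ∑ i, Complex.normSq (v t i)))
        (2 * (∑ i, Complex.normSq
            ((v' z + (T0 z - (Complex.I * ((c : ℝ) : ℂ))
                • (1 : Matrix (Fin n) (Fin n) ℂ)).mulVec (v z)) i))
          + 2 * ((∑ i, Complex.normSq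
                (((T1 z - (Complex.I * ((x1 : ℝ) : ℂ))
                  • (1 : Matrix (Fin n) (Fin n) ℂ)).mulVec (v z)) i))
              + (∑ i, Complex.normSq
                (((T2 z - (Complex.I * ((x2 : ℝ) : ℂ))
                  • (1 : Matrix (Fin n) (Fin n) ℂ)).mulVec (v z)) i))
              + (∑ i, Complex.normSq
                (((T3 z - (Complex.I * ((x3 : ℝ) : ℂ))
                  • (1 : Matrix (Fin n) (Fin n) ℂ)).mulVec (v z)) i)))) z
      ∧ 0 ≤ 2 * (∑ i, Complex.normSq
            ((v' z + (T0 z - (Complex.I * ((c : ℝ) : ℂ))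
                • (1 : Matrix (Fin n) (Fin n) ℂ)).mulVec (v z)) i))
          + 2 * ((∑ i, Complex.normSq
                (((T1 z - (Complex.I * ((x1 : ℝ) : ℂ))
                  • (1 : Matrix (Fin n) (Fin n) ℂ)).mulVec (v z)) i))
              + (∑ i, Complex.normSq
                (((T2 z - (Complex.I * ((x2 : ℝ) : ℂ))
                  • (1 : Matrix (Fin n) (Fin n) ℂ)).mulVec (v z)) i))
              + (∑ i, Complex.normSq
                (((T3 z - (Complex.I * ((x3 : ℝ) : ℂ))
                  • (1 : Matrix (Fin n) (Fin n) ℂ)).mulVec (v z)) i)))) ∧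
    ConvexOn ℝ (Ioo a b) (fun t => ∑ i, Complex.normSq (v t i)) :=
  norm_squared_convexity_general a b T0 T0' T1 T2 T3 hT0 hskew c x1 x2 x3 v v' v'' hv hv' hode
end

section
/- Let $\epsilon>0$, $R,S\in M_n(\mathbb{C})$, and let $a,b:[0,\epsilon)\to M_n(\mathbb{C})$ be continuous with $a$ continuously differentiable on $[0,\epsilon)$. Define $A(z) = R/z + a(z)$ and $B(z) = S/z + b(z)$ for $z\in(0,\epsilon)$, and suppose the Lax equation $A'(z) + [B(z),A(z)] = 0$ holds on $(0,\epsilon)$. Then $R = [S,R]$. -/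
open Matrix Set

/-- If `A(z) = R/z + a(z)` and `B(z) = S/z + b(z)` (with `a` of class
`C¹` and `b` continuous on `[0, ε)`) satisfy the Lax equation `A' + [B, A] = 0`
on `(0, ε)`, then the residues satisfy `R = [S, R]`. -/
theorem lax_pole_residue {n : ℕ} (ε : ℝ) (hε : 0 < ε)
    (R S : Matrix (Fin n) (Fin n) ℂ)
    (a b a' : ℝ → Matrix (Fin n) (Fin n) ℂ)
    (ha : ∀ z ∈ Ico (0 : ℝ) ε, ∀ i j,
        HasDerivWithinAt (fun t => a t i j) (a' z i j) (Ico (0 : ℝ) ε) z)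
    (ha' : ∀ i j, ContinuousOn (fun z => a' z i j) (Ico (0 : ℝ) ε))
    (hb : ∀ i j, ContinuousOn (fun z => b z i j) (Ico (0 : ℝ) ε))
    -- the Lax equation `A'(z) + [B(z), A(z)] = 0`, where `A(z) = R/z + a(z)`,
    -- `B(z) = S/z + b(z)` and `A'(z) = -R/z² + a'(z)`
    (hLax : ∀ z ∈ Ioo (0 : ℝ) ε,
        ((-(((z : ℂ)) ^ 2)⁻¹) • R + a' z)
          + ((((z : ℂ))⁻¹ • S + b z) * (((z : ℂ))⁻¹ • R + a z)
             - (((z : ℂ))⁻¹ • R + a z) * (((z : ℂ))⁻¹ • S + b z)) = 0) :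
    R = S * R - R * S := by
  set g : ℝ → Matrix (Fin n) (Fin n) ℂ := fun z =>
    -R + ((z : ℂ)) ^ 2 • a' z
      + ((S + (z : ℂ) • b z) * (R + (z : ℂ) • a z)
         - (R + (z : ℂ) • a z) * (S + (z : ℂ) • b z)) with hg
  have key : ∀ z ∈ Ioo (0 : ℝ) ε, g z = 0 := by
    intro z hz
    have hz0 : (z : ℂ) ≠ 0 := by
      exact_mod_cast ne_of_gt hz.1
    have h := congrArg (fun M => ((z : ℂ)) ^ 2 • M) (hLax z hz)
    simp only [smul_zero, smul_add, smul_sub, smul_smul] at h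
    have e1 : (z : ℂ) ^ 2 * (-((z : ℂ) ^ 2)⁻¹) = -1 := by field_simp
    have e2 : ((z : ℂ)) ^ 2 • ((((z : ℂ))⁻¹ • S + b z) * (((z : ℂ))⁻¹ • R + a z))
        = (S + (z : ℂ) • b z) * (R + (z : ℂ) • a z) := by
      have : ((z : ℂ)) ^ 2 • ((((z : ℂ))⁻¹ • S + b z) * (((z : ℂ))⁻¹ • R + a z))
          = ((z : ℂ) • (((z : ℂ))⁻¹ • S + b z)) * ((z : ℂ) • (((z : ℂ))⁻¹ • R + a z)) := by
        rw [smul_mul_smul_comm, ← pow_two]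
      rw [this]; simp [smul_add, smul_smul, mul_inv_cancel₀ hz0]
    have e3 : ((z : ℂ)) ^ 2 • ((((z : ℂ))⁻¹ • R + a z) * (((z : ℂ))⁻¹ • S + b z))
        = (R + (z : ℂ) • a z) * (S + (z : ℂ) • b z) := by
      have : ((z : ℂ)) ^ 2 • ((((z : ℂ))⁻¹ • R + a z) * (((z : ℂ))⁻¹ • S + b z))
          = ((z : ℂ) • (((z : ℂ))⁻¹ • R + a z)) * ((z : ℂ) • (((z : ℂ))⁻¹ • S + b z)) := by
        rw [smul_mul_smul_comm, ← pow_two]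
      rw [this]; simp [smul_add, smul_smul, mul_inv_cancel₀ hz0]
    rw [e1, e2, e3, neg_one_smul] at h
    simpa [hg] using h
  -- continuity of g on Ico 0 ε
  have hcont_a : ContinuousOn a (Ico (0 : ℝ) ε) := by
    apply continuousOn_pi.2; intro i; apply continuousOn_pi.2; intro j
    exact fun z hz => (ha z hz i j).continuousWithinAt
  have hcont_a' : ContinuousOn a' (Ico (0 : ℝ) ε) := by
    apply continuousOn_pi.2; intro i; apply continuousOn_pi.2; intro j
    exact ha' i j
  have hcont_b : ContinuousOn b (Ico (0 : ℝ) ε) := by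
    apply continuousOn_pi.2; intro i; apply continuousOn_pi.2; intro j
    exact hb i j
  have hzc : ContinuousOn (fun z : ℝ => (z : ℂ)) (Ico (0 : ℝ) ε) :=
    Complex.continuous_ofReal.continuousOn
  have hcont : ContinuousOn g (Ico (0 : ℝ) ε) := by
    apply ContinuousOn.add
    · exact (continuousOn_const.add ((hzc.pow 2).smul hcont_a'))
    · exact ((continuousOn_const.add (hzc.smul hcont_b)).mul
        (continuousOn_const.add (hzc.smul hcont_a))).sub
        ((continuousOn_const.add (hzc.smul hcont_a)).mul
        (continuousOn_const.add (hzc.smul hcont_b)))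
  have h0 : (0 : ℝ) ∈ Ico (0 : ℝ) ε := ⟨le_refl _, hε⟩
  have hne : (nhdsWithin (0 : ℝ) (Ioo (0 : ℝ) ε)).NeBot := by
    apply mem_closure_iff_nhdsWithin_neBot.mp
    rw [closure_Ioo (ne_of_lt hε)]
    exact ⟨le_refl _, le_of_lt hε⟩
  have htend : Filter.Tendsto g (nhdsWithin (0 : ℝ) (Ioo (0 : ℝ) ε)) (nhds (g 0)) :=
    ((hcont 0 h0).mono Ioo_subset_Ico_self).tendsto
  have htend0 : Filter.Tendsto g (nhdsWithin (0 : ℝ) (Ioo (0 : ℝ) ε)) (nhds 0) := by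
    apply Filter.Tendsto.congr' _ tendsto_const_nhds
    filter_upwards [self_mem_nhdsWithin] with z hz
    exact (key z hz).symm
  have hg0 : g 0 = 0 := tendsto_nhds_unique htend htend0
  have : -R + (S * R - R * S) = 0 := by simpa [hg] using hg0
  linear_combination (norm := abel) -this
end
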